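/- Let (R_i, t_i) be a perfectoid tower arising from (R_0, I_0) with a system of perfectoid pillars (I_i). Then for every j ≥ 0 and every element f ∈ R_j^{s♭}, f generates the ideal I_j^{s♭} if and only if for every i ≥ 0 the component Φ^{(j)}_i(f) generates the ideal I_{j+i}·(R_{j+i}/I_0R_{j+i}) of R_{j+i}/I_0R_{j+i}. In particular, I_j^{s♭} is a principal ideal and (I_{j+1}^{s♭})^p = I_j^{s♭}R_{j+1}^{s♭}. -/

import Mathlib

set_option synthInstance.maxHeartbeats 1000000
set_option maxHeartbeats 1000000
universe u

namespace PaperTower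

variable {R : ℕ → Type u} [∀ i, CommRing (R i)]

/-- The set of `J`-torsion elements of a commutative ring. -/
def torSet {A : Type*} [CommRing A] (J : Ideal A) : Set A :=
  {x | ∀ a ∈ J, ∃ n : ℕ, 0 < n ∧ a ^ n * x = 0}

/-- Cast ring homomorphism between quotients at equal indices. -/
def qcast (I : ∀ i, Ideal (R i)) {m n : ℕ} (h : m = n) :
    (R m ⧸ I m) →+* (R n ⧸ I n) := by subst h; exact RingHom.id _

/-- The `j`-th small tilt (inverse quasi-perfection) of a tower, as a subring of the
product of the quotients, consisting of sequences compatible with the Frobenius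
projections `F`. -/
def Tilt (I : ∀ i, Ideal (R i))
    (F : ∀ i, (R (i + 1) ⧸ I (i + 1)) →+* (R i ⧸ I i)) (j : ℕ) :
    Subring (∀ i, R (j + i) ⧸ I (j + i)) where
  carrier := {a | ∀ i, F (j + i) (a (i + 1)) = a i}
  zero_mem' := by
    intro i
    show F (j + i) 0 = 0
    simp
  one_mem' := by
    intro i
    show F (j + i) 1 = 1
    simp
  add_mem' := by
    intro a b ha hb i
    show F (j + i) (a (i + 1) + b (i + 1)) = a i + b i
    rw [map_add, ha i, hb i]
  mul_mem' := by
    intro a b ha hb i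
    show F (j + i) (a (i + 1) * b (i + 1)) = a i * b i
    rw [map_mul, ha i, hb i]
  neg_mem' := by
    intro a ha i
    show F (j + i) (-(a (i + 1))) = -(a i)
    rw [map_neg, ha i]

/-- The `m`-th projection `Φ^{(j)}_m` from the `j`-th small tilt. -/
def proj (I : ∀ i, Ideal (R i))
    (F : ∀ i, (R (i + 1) ⧸ I (i + 1)) →+* (R i ⧸ I i)) (j m : ℕ) :
    Tilt I F j →+* (R (j + m) ⧸ I (j + m)) :=
  (Pi.evalRingHom _ m).comp (Tilt I F j).subtype

/-!
Work in `A_i = R_i / I₀R_i` with `P_i` the image of the pillar `I_i`. Since `P_0 = 0` and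
`P_{i+1} = F_i⁻¹(P_i)`, where `ker F_i` consists of the elements with vanishing `p`-th power,
`P_i` is killed by `x ↦ x^{p^i}`; by induction on `ker F_{i+1} = ker F_i · A_{i+2}` one gets
`ker F_l = (g^{p^l})` for any generator `g` of `P_{l+1}`. A nilpotent Nakayama argument then lifts
generators of `P_l` along `F_l`, so there is `f ∈ R_j^{s♭}` all of whose components generate.
Such an `f` generates `I_j^{s♭}`: for `a ∈ I_j^{s♭}` the quotients `a_i / f_i` are determined only
modulo `Ann f_i`, but `F(Ann f_{i+1}) ⊆ F(F(Ann f_{i+2}))`, which is enough to choose them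
compatibly. Finally the `p`-th power of `f` with its first component dropped is `t_j^{s♭}(f)`.
-/

open Function

theorem mem_span_singleton_of_eq_add_mul_of_isNilpotent {S : Type*} [CommRing S] {x y a z : S}
    (h : x = y * a + x * z) (hz : IsNilpotent z) : x ∈ Ideal.span {y} := by
  rw [Ideal.mem_span_singleton, ← hz.isUnit_one_sub.dvd_mul_right]
  exact ⟨a, by rw [mul_sub, mul_one, sub_eq_iff_eq_add, ← h]⟩

theorem exists_seq_of_surjOn {X : ℕ → Type*} (π : ∀ i, X (i + 1) → X i) {S : ∀ i, Set (X i)}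
    (h0 : (S 0).Nonempty) (hS : ∀ i, Set.SurjOn (π i) (S (i + 1)) (S i)) :
    ∃ x : ∀ i, X i, ∀ i, x i ∈ S i ∧ π i (x (i + 1)) = x i := by
  choose y hyS hy using fun i x (hx : x ∈ S i) => hS i hx
  let x : ∀ i, S i := fun i =>
    Nat.rec ⟨h0.some, h0.some_mem⟩ (fun i xi => ⟨y i xi xi.2, hyS i xi xi.2⟩) i
  exact ⟨fun i => (x i).1, fun i => ⟨(x i).2, hy i (x i).1 (x i).2⟩⟩

/-- What the argument uses of a perfectoid tower with perfectoid pillars, read in the quotients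
`A i = R i / I₀R i`; `P i` is the image of the pillar `I i`. -/
structure IsPillarSystem {A : ℕ → Type*} [∀ i, CommRing (A i)] (p : ℕ)
    (tbar : ∀ i, A i →+* A (i + 1)) (F : ∀ i, A (i + 1) →+* A i) (P : ∀ i, Ideal (A i)) :
    Prop where
  one_lt : 1 < p
  tbar_injective : ∀ i, Injective (tbar i)
  tbar_F : ∀ i x, tbar i (F i x) = x ^ p
  F_surjective : ∀ i, Surjective (F i)
  ker_F_zero : RingHom.ker (F 0) = P 1
  ker_F_succ : ∀ i, RingHom.ker (F (i + 1)) = (RingHom.ker (F i)).map (tbar (i + 1))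
  pillar_zero : P 0 = ⊥
  comap_pillar : ∀ i, (P i).comap (F i) = P (i + 1)
  pillar_principal : ∀ i, (P i).IsPrincipal

namespace IsPillarSystem

variable {A : ℕ → Type*} [∀ i, CommRing (A i)] {p : ℕ} {tbar : ∀ i, A i →+* A (i + 1)}
  {F : ∀ i, A (i + 1) →+* A i} {P : ∀ i, Ideal (A i)}

theorem F_eq_zero_iff (hT : IsPillarSystem p tbar F P) {l : ℕ} (x : A (l + 1)) :
    F l x = 0 ↔ x ^ p = 0 := by
  rw [← hT.tbar_F l x, map_eq_zero_iff _ (hT.tbar_injective l)]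

theorem mem_pillar_succ_iff (hT : IsPillarSystem p tbar F P) {l : ℕ} (x : A (l + 1)) :
    x ∈ P (l + 1) ↔ F l x ∈ P l := by
  rw [← hT.comap_pillar]
  rfl

theorem pow_eq_zero_of_mem_pillar (hT : IsPillarSystem p tbar F P) :
    ∀ {l : ℕ} {x : A l}, x ∈ P l → x ^ p ^ l = 0
  | 0, x, hx => by simpa [hT.pillar_zero] using hx
  | l + 1, x, hx => by
    have h := hT.pow_eq_zero_of_mem_pillar ((hT.mem_pillar_succ_iff x).1 hx)
    rwa [← map_pow, F_eq_zero_iff hT, ← pow_mul, ← pow_succ] at h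

theorem pillar_eq_span_F (hT : IsPillarSystem p tbar F P) {l : ℕ} {g : A (l + 1)}
    (hg : P (l + 1) = Ideal.span {g}) : P l = Ideal.span {F l g} := by
  rw [← Ideal.map_comap_of_surjective (F l) (hT.F_surjective l) (P l), hT.comap_pillar, hg,
    Ideal.map_span, Set.image_singleton]

theorem ker_F_eq_span_pow (hT : IsPillarSystem p tbar F P) :
    ∀ {l : ℕ} {g : A (l + 1)}, P (l + 1) = Ideal.span {g} →
      RingHom.ker (F l) = Ideal.span {g ^ p ^ l}
  | 0, g, hg => by rw [hT.ker_F_zero, hg, pow_zero, pow_one]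
  | l + 1, g, hg => by
    rw [hT.ker_F_succ, hT.ker_F_eq_span_pow (hT.pillar_eq_span_F hg), Ideal.map_span,
      Set.image_singleton, map_pow, hT.tbar_F, ← pow_mul, ← pow_succ']

theorem exists_lift_generator (hT : IsPillarSystem p tbar F P) {l : ℕ} {g : A l}
    (hg : P l = Ideal.span {g}) : ∃ g' : A (l + 1), P (l + 1) = Ideal.span {g'} ∧ F l g' = g := by
  obtain ⟨G, hG⟩ : ∃ G, P (l + 1) = Ideal.span {G} := (hT.pillar_principal (l + 1)).principal
  have hGmem : G ∈ P (l + 1) := hG ▸ Ideal.mem_span_singleton_self G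
  cases l with
  | zero =>
    refine ⟨G, hG, ?_⟩
    have hFG := (hT.mem_pillar_succ_iff G).1 hGmem
    rw [hT.pillar_zero, eq_comm, Ideal.span_singleton_eq_bot] at hg
    rw [hT.pillar_zero, Ideal.mem_bot] at hFG
    rw [hFG, hg]
  | succ k =>
    obtain ⟨w, rfl⟩ := hT.F_surjective (k + 1) g
    refine ⟨w, le_antisymm ?_ ?_, rfl⟩
    · obtain ⟨c, hc⟩ : F (k + 1) w ∣ F (k + 1) G :=
        Ideal.mem_span_singleton.1 (hg ▸ (hT.mem_pillar_succ_iff G).1 hGmem)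
      obtain ⟨C, rfl⟩ := hT.F_surjective (k + 1) c
      have hker : G - w * C ∈ RingHom.ker (F (k + 1)) := by
        rw [RingHom.mem_ker, map_sub, map_mul, hc, sub_self]
      rw [hT.ker_F_eq_span_pow hG, Ideal.mem_span_singleton'] at hker
      obtain ⟨s, hs⟩ := hker
      have hN : 1 < p ^ (k + 1) := Nat.one_lt_pow (Nat.succ_ne_zero k) hT.one_lt
      -- `G ≡ G ^ p ^ (k + 1) * s` modulo `w`, and `G` is nilpotent.
      rw [hG, Ideal.span_singleton_le_iff_mem]
      refine mem_span_singleton_of_eq_add_mul_of_isNilpotent (a := C)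
        (z := G ^ (p ^ (k + 1) - 1) * s) ?_ ?_
      · rw [← mul_assoc, ← pow_succ', Nat.sub_add_cancel hN.le, mul_comm _ s, hs]
        ring
      · exact Commute.isNilpotent_mul_right (Commute.all _ _)
          (IsNilpotent.pow_of_pos ⟨_, hT.pow_eq_zero_of_mem_pillar hGmem⟩ (by omega))
    · rw [Ideal.span_singleton_le_iff_mem, hT.mem_pillar_succ_iff, hg]
      exact Ideal.mem_span_singleton_self _

theorem exists_annihilator_F_F_eq (hT : IsPillarSystem p tbar F P) {k : ℕ} {g : A (k + 2)}
    (hg : P (k + 2) = Ideal.span {g}) {z : A (k + 1)} (hz : z * F (k + 1) g = 0) :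
    ∃ u, u * g = 0 ∧ F k (F (k + 1) u) = F k z := by
  obtain ⟨v, rfl⟩ := hT.F_surjective (k + 1) z
  have hker : v * g ∈ RingHom.ker (F (k + 1)) := by rwa [RingHom.mem_ker, map_mul]
  rw [hT.ker_F_eq_span_pow hg, Ideal.mem_span_singleton'] at hker
  obtain ⟨w, hw⟩ := hker
  have hlt : p ^ k < p ^ (k + 1) := Nat.pow_lt_pow_right hT.one_lt (Nat.lt_succ_self k)
  have hFFg : F k (F (k + 1) g) ^ p ^ k = 0 := by
    refine hT.pow_eq_zero_of_mem_pillar ((hT.mem_pillar_succ_iff _).1 ?_)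
    exact (hT.mem_pillar_succ_iff g).1 (hg ▸ Ideal.mem_span_singleton_self g)
  refine ⟨v - w * g ^ (p ^ (k + 1) - 1), ?_, ?_⟩
  · rw [sub_mul, mul_assoc, ← pow_succ, Nat.sub_add_cancel (by omega), hw, sub_self]
  · rw [map_sub, map_sub, map_mul, map_mul, map_pow, map_pow,
      pow_eq_zero_of_le (by omega) hFFg, mul_zero, sub_zero]

theorem exists_mul_eq_F_F_eq (hT : IsPillarSystem p tbar F P) {k : ℕ} {g b : A (k + 2)}
    (hg : P (k + 2) = Ideal.span {g}) (hb : b ∈ P (k + 2)) {s : A (k + 1)}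
    (hs : s * F (k + 1) g = F (k + 1) b) :
    ∃ s', s' * g = b ∧ F k (F (k + 1) s') = F k s := by
  obtain ⟨d, hd⟩ := Ideal.mem_span_singleton'.1 (hg ▸ hb)
  obtain ⟨u, hu, hFu⟩ := hT.exists_annihilator_F_F_eq hg (z := s - F (k + 1) d)
    (by rw [sub_mul, hs, ← map_mul, hd, sub_self])
  refine ⟨d + u, by rw [add_mul, hd, hu, add_zero], ?_⟩
  rw [map_add, map_add, hFu, map_sub, add_sub_cancel]

end IsPillarSystem

section Tilt

variable {I : ∀ i, Ideal (R i)} {F : ∀ i, (R (i + 1) ⧸ I (i + 1)) →+* (R i ⧸ I i)}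
  {P : ∀ i, Ideal (R i ⧸ I i)} {j : ℕ}

/-- `I_j^{s♭}`, for the family `P i = I_i (R_i / I₀R_i)`. -/
def tiltIdeal (I : ∀ i, Ideal (R i)) (F : ∀ i, (R (i + 1) ⧸ I (i + 1)) →+* (R i ⧸ I i))
    (P : ∀ i, Ideal (R i ⧸ I i)) (j : ℕ) : Ideal (Tilt I F j) :=
  RingHom.ker ((Ideal.Quotient.mk (P j)).comp (proj I F j 0))

theorem mem_tiltIdeal_iff {a : Tilt I F j} : a ∈ tiltIdeal I F P j ↔ proj I F j 0 a ∈ P j := by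
  rw [tiltIdeal, RingHom.mem_ker, RingHom.comp_apply, Ideal.Quotient.eq_zero_iff_mem]

theorem F_proj_succ (a : Tilt I F j) (i : ℕ) :
    F (j + i) (proj I F j (i + 1) a) = proj I F j i a :=
  a.2 i

namespace IsPillarSystem

variable {p : ℕ} {tbar : ∀ i, (R i ⧸ I i) →+* (R (i + 1) ⧸ I (i + 1))}

theorem exists_tilt_generator (hT : IsPillarSystem p tbar F P) (j : ℕ) :
    ∃ f : Tilt I F j, ∀ i, P (j + i) = Ideal.span {proj I F j i f} := by
  obtain ⟨x, hx⟩ := exists_seq_of_surjOn (fun i => F (j + i))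
    (S := fun i => {g | P (j + i) = Ideal.span {g}}) (hT.pillar_principal j).principal
    fun i _ hg => by
      obtain ⟨g', hg', hFg'⟩ := hT.exists_lift_generator hg
      exact ⟨g', hg', hFg'⟩
  exact ⟨⟨x, fun i => (hx i).2⟩, fun i => (hx i).1⟩

theorem proj_mem_of_mem_tiltIdeal (hT : IsPillarSystem p tbar F P) {a : Tilt I F j}
    (ha : a ∈ tiltIdeal I F P j) : ∀ i, proj I F j i a ∈ P (j + i)
  | 0 => mem_tiltIdeal_iff.1 ha
  | i + 1 => (hT.mem_pillar_succ_iff (l := j + i) _).2 <| by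
    rw [F_proj_succ]
    exact hT.proj_mem_of_mem_tiltIdeal ha i

theorem dvd_of_mem_tiltIdeal (hT : IsPillarSystem p tbar F P) {f a : Tilt I F j}
    (hf : ∀ i, P (j + i) = Ideal.span {proj I F j i f}) (ha : a ∈ tiltIdeal I F P j) :
    f ∣ a := by
  have ha' := hT.proj_mem_of_mem_tiltIdeal ha
  let S : ∀ i, Set (R (j + i) ⧸ I (j + i)) := fun i =>
    F (j + i) '' {s | s * proj I F j (i + 1) f = proj I F j (i + 1) a}
  have hS0 : (S 0).Nonempty := by
    obtain ⟨d, hd⟩ := Ideal.mem_span_singleton'.1 ((hf 1).le (ha' 1))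
    exact ⟨_, d, hd, rfl⟩
  have hS : ∀ i, Set.SurjOn (F (j + i)) (S (i + 1)) (S i) := by
    rintro i _ ⟨s, hs, rfl⟩
    obtain ⟨s', hs', hss'⟩ := hT.exists_mul_eq_F_F_eq (k := j + i) (hf (i + 2)) (ha' (i + 2))
      (s := s) (by
        change s * F (j + (i + 1)) (proj I F j (i + 2) f) = F (j + (i + 1)) (proj I F j (i + 2) a)
        rw [F_proj_succ, F_proj_succ, hs])
    exact ⟨_, ⟨s', hs', rfl⟩, hss'⟩
  obtain ⟨c, hc⟩ := exists_seq_of_surjOn (fun i => F (j + i)) hS0 hS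
  refine ⟨⟨c, fun i => (hc i).2⟩, Subtype.ext (funext fun i => ?_)⟩
  obtain ⟨s, hs, hsc⟩ := (hc i).1
  change proj I F j i a = proj I F j i f * c i
  rw [← hsc, ← F_proj_succ a, ← F_proj_succ f, ← map_mul, mul_comm, hs]

theorem tiltIdeal_eq_span (hT : IsPillarSystem p tbar F P) {f : Tilt I F j}
    (hf : ∀ i, P (j + i) = Ideal.span {proj I F j i f}) :
    tiltIdeal I F P j = Ideal.span {f} :=
  le_antisymm (fun _ ha => Ideal.mem_span_singleton.2 (hT.dvd_of_mem_tiltIdeal hf ha))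
    ((Ideal.span_singleton_le_iff_mem _).2 (mem_tiltIdeal_iff.2 ((hf 0).ge
      (Ideal.mem_span_singleton_self _))))

theorem tiltIdeal_eq_span_iff (hT : IsPillarSystem p tbar F P) (f : Tilt I F j) :
    tiltIdeal I F P j = Ideal.span {f} ↔ ∀ i, P (j + i) = Ideal.span {proj I F j i f} := by
  refine ⟨fun h i => ?_, hT.tiltIdeal_eq_span⟩
  obtain ⟨g, hg⟩ := hT.exists_tilt_generator j
  rw [hg i, ← Set.image_singleton, ← Ideal.map_span, ← hT.tiltIdeal_eq_span hg, h,
    Ideal.map_span, Set.image_singleton]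

end IsPillarSystem

theorem F_qcast {m n : ℕ} (h : m + 1 = n + 1) (x : R (m + 1) ⧸ I (m + 1)) :
    F n (qcast I h x) = qcast I (Nat.succ.inj h) (F m x) := by
  obtain rfl : m = n := Nat.succ.inj h
  rfl

theorem eq_span_qcast {m n : ℕ} (h : m = n) {x : R m ⧸ I m} (hx : P m = Ideal.span {x}) :
    P n = Ideal.span {qcast I h x} := by
  subst h
  exact hx

def tiltShift (a : Tilt I F j) : Tilt I F (j + 1) :=
  ⟨fun i => qcast I (by omega : j + (i + 1) = j + 1 + i) (a.1 (i + 1)), fun i => by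
    change F (j + 1 + i) (qcast I _ (a.1 (i + 2))) = _
    rw [F_qcast]
    exact congrArg _ (a.2 (i + 1))⟩

theorem eq_span_proj_tiltShift {f : Tilt I F j}
    (hf : ∀ i, P (j + i) = Ideal.span {proj I F j i f}) (i : ℕ) :
    P (j + 1 + i) = Ideal.span {proj I F (j + 1) i (tiltShift f)} :=
  eq_span_qcast _ (hf (i + 1))

theorem tiltShift_pow {p : ℕ} {tbar : ∀ i, (R i ⧸ I i) →+* (R (i + 1) ⧸ I (i + 1))}
    (hF : ∀ i x, tbar i (F i x) = x ^ p) {ts : Tilt I F j → Tilt I F (j + 1)}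
    (hts : ∀ (a : Tilt I F j) (i : ℕ),
      (ts a).1 i = qcast I (Nat.add_right_comm j i 1) (tbar (j + i) (a.1 i)))
    (a : Tilt I F j) : tiltShift a ^ p = ts a := by
  refine Subtype.ext (funext fun i => ?_)
  change qcast I _ (a.1 (i + 1)) ^ p = _
  rw [hts, ← map_pow, ← hF (j + i)]
  exact congrArg (qcast I _ ∘ tbar (j + i)) (F_proj_succ a i)

end Tilt

theorem ker_F_succ_of_ker_F_eq_map {t : ∀ i, R i →+* R (i + 1)} {I : ∀ i, Ideal (R i)}
    {tbar : ∀ i, (R i ⧸ I i) →+* (R (i + 1) ⧸ I (i + 1))}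
    (htbar : ∀ i (x : R i),
      tbar i (Ideal.Quotient.mk (I i) x) = Ideal.Quotient.mk (I (i + 1)) (t i x))
    {F : ∀ i, (R (i + 1) ⧸ I (i + 1)) →+* (R i ⧸ I i)} {I1e : ∀ i, Ideal (R (i + 1))}
    (hI1es : ∀ i, I1e (i + 1) = (I1e i).map (t (i + 1)))
    (hkerF : ∀ i, RingHom.ker (F i) = (I1e i).map (Ideal.Quotient.mk (I (i + 1)))) (i : ℕ) :
    RingHom.ker (F (i + 1)) = (RingHom.ker (F i)).map (tbar (i + 1)) := by
  rw [hkerF, hkerF, hI1es, Ideal.map_map, Ideal.map_map]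
  congr 1
  ext x
  exact (htbar (i + 1) x).symm

/-- For a perfectoid tower with a system of perfectoid pillars `(I_i)`,
and `I_j^{s♭} := ker (π_j ∘ Φ^{(j)}_0)`: an element `f ∈ R_j^{s♭}` generates `I_j^{s♭}`
iff for every `i` the component `Φ^{(j)}_i f` generates `I_{j+i}·(R_{j+i}/I₀R_{j+i})`.
In particular `I_j^{s♭}` is principal and `(I_{j+1}^{s♭})^p = I_j^{s♭}R_{j+1}^{s♭}`. -/
theorem stmt14 (p : ℕ) (hp : p.Prime)
    (R : ℕ → Type u) [∀ i, CommRing (R i)]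
    (t : ∀ i, R i →+* R (i + 1))
    (I : ∀ i, Ideal (R i))
    (tbar : ∀ i, (R i ⧸ I i) →+* (R (i + 1) ⧸ I (i + 1)))
    (htbar : ∀ i (x : R i),
      tbar i (Ideal.Quotient.mk (I i) x) = Ideal.Quotient.mk (I (i + 1)) (t i x))
    (htbarInj : ∀ i, Function.Injective (tbar i))
    (F : ∀ i, (R (i + 1) ⧸ I (i + 1)) →+* (R i ⧸ I i))
    (hF : ∀ i (x : R (i + 1) ⧸ I (i + 1)), tbar i (F i x) = x ^ p)
    (hFsurj : ∀ i, Function.Surjective (F i))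
    (I1e : ∀ i, Ideal (R (i + 1)))
    (hI1es : ∀ i, I1e (i + 1) = (I1e i).map (t (i + 1)))
    (hkerF : ∀ i, RingHom.ker (F i) = (I1e i).map (Ideal.Quotient.mk (I (i + 1))))
    (ts : ∀ j, Tilt I F j →+* Tilt I F (j + 1))
    (hts : ∀ (j : ℕ) (a : Tilt I F j) (i : ℕ),
      (ts j a).1 i = qcast I (by omega : (j + i) + 1 = (j + 1) + i) (tbar (j + i) (a.1 i)))
    (Ipill : ∀ i, Ideal (R i))
    (hpill0 : Ipill 0 = I 0) (hpill1 : Ipill 1 = I1e 0)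
    (hpillPrin : ∀ i, (Ipill i).IsPrincipal)
    (hpill : ∀ i, Ideal.comap (F i) ((Ipill i).map (Ideal.Quotient.mk (I i)))
        = (Ipill (i + 1)).map (Ideal.Quotient.mk (I (i + 1))))
    (j : ℕ) :
    (∀ f : Tilt I F j,
      RingHom.ker ((Ideal.Quotient.mk ((Ipill j).map (Ideal.Quotient.mk (I j)))).comp
          (proj I F j 0)) = Ideal.span {f} ↔
        ∀ i : ℕ, (Ipill (j + i)).map (Ideal.Quotient.mk (I (j + i)))
          = Ideal.span {proj I F j i f}) ∧
    (RingHom.ker ((Ideal.Quotient.mk ((Ipill j).map (Ideal.Quotient.mk (I j)))).comp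
        (proj I F j 0))).IsPrincipal ∧
    RingHom.ker ((Ideal.Quotient.mk ((Ipill (j + 1)).map (Ideal.Quotient.mk (I (j + 1))))).comp
        (proj I F (j + 1) 0)) ^ p
      = (RingHom.ker ((Ideal.Quotient.mk ((Ipill j).map (Ideal.Quotient.mk (I j)))).comp
          (proj I F j 0))).map (ts j) := by
  set P : ∀ i, Ideal (R i ⧸ I i) := fun i => (Ipill i).map (Ideal.Quotient.mk (I i))
  have hT : IsPillarSystem p tbar F P :=
    { one_lt := hp.one_lt
      tbar_injective := htbarInj
      tbar_F := hF
      F_surjective := hFsurj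
      ker_F_zero := by rw [hkerF, ← hpill1]
      ker_F_succ := ker_F_succ_of_ker_F_eq_map htbar hI1es hkerF
      pillar_zero := by simp only [P, hpill0, Ideal.map_quotient_self]
      comap_pillar := hpill
      pillar_principal := fun i => (hpillPrin i).map_ringHom _ }
  obtain ⟨f, hf⟩ := hT.exists_tilt_generator j
  refine ⟨hT.tiltIdeal_eq_span_iff, ⟨f, hT.tiltIdeal_eq_span hf⟩, ?_⟩
  change tiltIdeal I F P (j + 1) ^ p = (tiltIdeal I F P j).map (ts j)
  rw [hT.tiltIdeal_eq_span (eq_span_proj_tiltShift hf), hT.tiltIdeal_eq_span hf,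
    Ideal.span_singleton_pow, Ideal.map_span, Set.image_singleton, tiltShift_pow hF (hts j)]

end PaperTower
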